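/- arXiv:1806.05902 — 2 statements merged into one kernel-verified Lean document; each statement's English description precedes it below -/
import Mathlib

section
/- For every integer n ≥ 3, the commutator subgroup GVB_n' = [GVB_n, GVB_n] of the generalized virtual braid group GVB_n equals the subgroup of GVB_n generated by the set of all elements α_{m,k,i} = σ_1^m ρ_1^k σ_i ρ_1^{−k} σ_1^{−1} σ_1^{−m} and β_{m,k,i} = σ_1^m ρ_1^k ρ_i ρ_1^{−k} ρ_1^{−1} σ_1^{−m}, where m, k range over all integers and i ranges over 1, …, n−1. -/
namespace GenVirtBraid

/-- The free-group generator word for `σ_{i+1}` (0-indexed `i`). -/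
def σw (n : ℕ) (i : Fin (n-1)) : FreeGroup (Fin (n-1) ⊕ Fin (n-1)) := FreeGroup.of (Sum.inl i)

/-- The free-group generator word for `ρ_{i+1}` (0-indexed `i`). -/
def ρw (n : ℕ) (i : Fin (n-1)) : FreeGroup (Fin (n-1) ⊕ Fin (n-1)) := FreeGroup.of (Sum.inr i)

/-- Defining relators of the generalized virtual braid group `GVB_n`. -/
def gvbRels (n : ℕ) : Set (FreeGroup (Fin (n-1) ⊕ Fin (n-1))) :=
  {r | ∃ i j : Fin (n-1), ((i:ℕ)+1 < (j:ℕ) ∨ (j:ℕ)+1 < (i:ℕ)) ∧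
      r = σw n i * σw n j * (σw n i)⁻¹ * (σw n j)⁻¹} ∪
  {r | ∃ i j : Fin (n-1), (j:ℕ) = (i:ℕ)+1 ∧
      r = σw n i * σw n j * σw n i * (σw n j * σw n i * σw n j)⁻¹} ∪
  {r | ∃ i j : Fin (n-1), ((i:ℕ)+1 < (j:ℕ) ∨ (j:ℕ)+1 < (i:ℕ)) ∧
      r = ρw n i * ρw n j * (ρw n i)⁻¹ * (ρw n j)⁻¹} ∪
  {r | ∃ i j : Fin (n-1), (j:ℕ) = (i:ℕ)+1 ∧
      r = ρw n i * ρw n j * ρw n i * (ρw n j * ρw n i * ρw n j)⁻¹} ∪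
  {r | ∃ i j : Fin (n-1), (j:ℕ) = (i:ℕ)+1 ∧
      r = ρw n i * σw n j * σw n i * (σw n j * σw n i * ρw n j)⁻¹} ∪
  {r | ∃ i j : Fin (n-1), (j:ℕ) = (i:ℕ)+1 ∧
      r = ρw n j * σw n i * σw n j * (σw n i * σw n j * ρw n i)⁻¹} ∪
  {r | ∃ i j : Fin (n-1), ((i:ℕ)+1 < (j:ℕ) ∨ (j:ℕ)+1 < (i:ℕ)) ∧
      r = σw n i * ρw n j * (σw n i)⁻¹ * (ρw n j)⁻¹}

/-- The generalized virtual braid group `GVB_n` (Fang's presentation). -/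
abbrev GVB (n : ℕ) := PresentedGroup (gvbRels n)

/-- The generator `σ_{i+1}` of `GVB_n` (0-indexed `i`). -/
def σ (n : ℕ) (i : Fin (n-1)) : GVB n := PresentedGroup.of (Sum.inl i)

/-- The generator `ρ_{i+1}` of `GVB_n` (0-indexed `i`). -/
def ρ (n : ℕ) (i : Fin (n-1)) : GVB n := PresentedGroup.of (Sum.inr i)

end GenVirtBraid

namespace GenVirtBraid

/-- The element `α_{m,k,i} = σ₁^m ρ₁^k σ_i ρ₁^{-k} σ₁^{-1} σ₁^{-m}` of `GVB_n`. -/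
def alphaElt (n : ℕ) (h : 0 < n - 1) (m k : ℤ) (i : Fin (n-1)) : GVB n :=
  σ n ⟨0, h⟩ ^ m * ρ n ⟨0, h⟩ ^ k * σ n i * ρ n ⟨0, h⟩ ^ (-k) *
    (σ n ⟨0, h⟩)⁻¹ * σ n ⟨0, h⟩ ^ (-m)

/-- The element `β_{m,k,i} = σ₁^m ρ₁^k ρ_i ρ₁^{-k} ρ₁^{-1} σ₁^{-m}` of `GVB_n`. -/
def betaElt (n : ℕ) (h : 0 < n - 1) (m k : ℤ) (i : Fin (n-1)) : GVB n :=
  σ n ⟨0, h⟩ ^ m * ρ n ⟨0, h⟩ ^ k * ρ n i * ρ n ⟨0, h⟩ ^ (-k) *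
    (ρ n ⟨0, h⟩)⁻¹ * σ n ⟨0, h⟩ ^ (-m)

end GenVirtBraid

namespace GenVirtBraid

variable {n : ℕ}

/-! ### Relators hold in `GVB n` -/

lemma mk_rel_one {r : FreeGroup (Fin (n-1) ⊕ Fin (n-1))} (hr : r ∈ gvbRels n) :
    PresentedGroup.mk (gvbRels n) r = 1 :=
  (QuotientGroup.eq_one_iff r).2 (Subgroup.subset_normalClosure hr)

lemma sigma_braid (i j : Fin (n-1)) (hij : (j:ℕ) = (i:ℕ)+1) :
    σ n i * σ n j * σ n i = σ n j * σ n i * σ n j := by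
  have hmem : σw n i * σw n j * σw n i * (σw n j * σw n i * σw n j)⁻¹ ∈ gvbRels n := by
    simp only [gvbRels, Set.mem_union, Set.mem_setOf_eq]
    exact Or.inl (Or.inl (Or.inl (Or.inl (Or.inl (Or.inr ⟨i, j, hij, rfl⟩)))))
  have h1 := mk_rel_one hmem
  simp only [map_mul, map_inv] at h1
  rw [mul_inv_eq_one] at h1
  exact h1

lemma rho_braid (i j : Fin (n-1)) (hij : (j:ℕ) = (i:ℕ)+1) :
    ρ n i * ρ n j * ρ n i = ρ n j * ρ n i * ρ n j := by
  have hmem : ρw n i * ρw n j * ρw n i * (ρw n j * ρw n i * ρw n j)⁻¹ ∈ gvbRels n := by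
    simp only [gvbRels, Set.mem_union, Set.mem_setOf_eq]
    exact Or.inl (Or.inl (Or.inl (Or.inr ⟨i, j, hij, rfl⟩)))
  have h1 := mk_rel_one hmem
  simp only [map_mul, map_inv] at h1
  rw [mul_inv_eq_one] at h1
  exact h1

/-! ### Abelianization: all σ's (resp. ρ's) agree -/

private lemma braid_abelian {A : Type*} [CommGroup A] {a b : A}
    (hb : a * b * a = b * a * b) : a = b := by
  rw [mul_comm b a] at hb
  exact mul_left_cancel hb

lemma ab_sigma (h : 0 < n - 1) : ∀ v (hv : v < n - 1),
    Abelianization.of (σ n ⟨v, hv⟩) = Abelianization.of (σ n ⟨0, h⟩)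
  | 0, _ => rfl
  | (w+1), hv => by
    have hw : w < n - 1 := by omega
    have hb := congrArg Abelianization.of (sigma_braid (n := n) ⟨w, hw⟩ ⟨w+1, hv⟩ rfl)
    simp only [map_mul] at hb
    rw [← braid_abelian hb]
    exact ab_sigma h w hw

lemma ab_rho (h : 0 < n - 1) : ∀ v (hv : v < n - 1),
    Abelianization.of (ρ n ⟨v, hv⟩) = Abelianization.of (ρ n ⟨0, h⟩)
  | 0, _ => rfl
  | (w+1), hv => by
    have hw : w < n - 1 := by omega
    have hb := congrArg Abelianization.of (rho_braid (n := n) ⟨w, hw⟩ ⟨w+1, hv⟩ rfl)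
    simp only [map_mul] at hb
    rw [← braid_abelian hb]
    exact ab_rho h w hw

lemma alpha_mem_commutator (h : 0 < n - 1) (m k : ℤ) (i : Fin (n-1)) :
    alphaElt n h m k i ∈ commutator (GVB n) := by
  have hab : Abelianization.of (alphaElt n h m k i) = 1 := by
    unfold alphaElt
    simp only [map_mul, map_zpow, map_inv]
    have hi : Abelianization.of (σ n i) = Abelianization.of (σ n ⟨0, h⟩) := ab_sigma h i.1 i.2
    rw [hi]
    set A := Abelianization.of (σ n ⟨0, h⟩)
    set B := Abelianization.of (ρ n ⟨0, h⟩)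
    rw [mul_assoc (A ^ m) (B ^ k) A, mul_comm (B ^ k) A, ← mul_assoc]
    group
  exact (QuotientGroup.eq_one_iff _).1 hab

lemma beta_mem_commutator (h : 0 < n - 1) (m k : ℤ) (i : Fin (n-1)) :
    betaElt n h m k i ∈ commutator (GVB n) := by
  have hab : Abelianization.of (betaElt n h m k i) = 1 := by
    unfold betaElt
    simp only [map_mul, map_zpow, map_inv]
    have hi : Abelianization.of (ρ n i) = Abelianization.of (ρ n ⟨0, h⟩) := ab_rho h i.1 i.2
    rw [hi]
    group
  exact (QuotientGroup.eq_one_iff _).1 hab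

/-! ### Exponent-sum homomorphisms -/

def sigFun (n : ℕ) : Fin (n-1) ⊕ Fin (n-1) → Multiplicative ℤ :=
  Sum.elim (fun _ => Multiplicative.ofAdd 1) (fun _ => 1)

def rhoFun (n : ℕ) : Fin (n-1) ⊕ Fin (n-1) → Multiplicative ℤ :=
  Sum.elim (fun _ => 1) (fun _ => Multiplicative.ofAdd 1)

lemma sig_rels : ∀ r ∈ gvbRels n, FreeGroup.lift (sigFun n) r = 1 := by
  intro r hr
  simp only [gvbRels, Set.mem_union, Set.mem_setOf_eq] at hr
  rcases hr with ((((((⟨i,j,_,rfl⟩|⟨i,j,_,rfl⟩)|⟨i,j,_,rfl⟩)|⟨i,j,_,rfl⟩)|⟨i,j,_,rfl⟩)|⟨i,j,_,rfl⟩)|⟨i,j,_,rfl⟩) <;>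
    simp [σw, ρw, sigFun, mul_comm, mul_assoc, mul_left_comm]

lemma rho_rels : ∀ r ∈ gvbRels n, FreeGroup.lift (rhoFun n) r = 1 := by
  intro r hr
  simp only [gvbRels, Set.mem_union, Set.mem_setOf_eq] at hr
  rcases hr with ((((((⟨i,j,_,rfl⟩|⟨i,j,_,rfl⟩)|⟨i,j,_,rfl⟩)|⟨i,j,_,rfl⟩)|⟨i,j,_,rfl⟩)|⟨i,j,_,rfl⟩)|⟨i,j,_,rfl⟩) <;>
    simp [σw, ρw, rhoFun, mul_comm, mul_assoc, mul_left_comm]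

def sigCount (n : ℕ) : GVB n →* Multiplicative ℤ := PresentedGroup.toGroup sig_rels

def rhoCount (n : ℕ) : GVB n →* Multiplicative ℤ := PresentedGroup.toGroup rho_rels

@[simp] lemma sigCount_σ (i : Fin (n-1)) : sigCount n (σ n i) = Multiplicative.ofAdd 1 :=
  PresentedGroup.toGroup.of _
@[simp] lemma sigCount_ρ (i : Fin (n-1)) : sigCount n (ρ n i) = 1 :=
  PresentedGroup.toGroup.of _
@[simp] lemma rhoCount_σ (i : Fin (n-1)) : rhoCount n (σ n i) = 1 :=
  PresentedGroup.toGroup.of _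
@[simp] lemma rhoCount_ρ (i : Fin (n-1)) : rhoCount n (ρ n i) = Multiplicative.ofAdd 1 :=
  PresentedGroup.toGroup.of _

/-! ### The generating set and the decomposition lemma -/

def genSet (n : ℕ) (h : 0 < n - 1) : Set (GVB n) :=
  {x : GVB n | ∃ m k : ℤ, ∃ i : Fin (n-1),
    x = alphaElt n h m k i ∨ x = betaElt n h m k i}

lemma mk_single_true (x : Fin (n-1) ⊕ Fin (n-1)) :
    PresentedGroup.mk (gvbRels n) (FreeGroup.mk [(x, true)]) = PresentedGroup.of x := rfl

lemma mk_single_false (x : Fin (n-1) ⊕ Fin (n-1)) :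
    PresentedGroup.mk (gvbRels n) (FreeGroup.mk [(x, false)]) = (PresentedGroup.of x)⁻¹ := by
  have : FreeGroup.mk [(x, false)] = (FreeGroup.of x : FreeGroup (Fin (n-1) ⊕ Fin (n-1)))⁻¹ := by
    rw [show (FreeGroup.of x : FreeGroup (Fin (n-1) ⊕ Fin (n-1))) = FreeGroup.mk [(x, true)] from rfl,
      FreeGroup.inv_mk]
    simp [FreeGroup.invRev]
  rw [this, map_inv]
  rfl

lemma decomp (h : 0 < n - 1) (g : GVB n) :
    ∃ x ∈ Subgroup.closure (genSet n h), ∃ m k : ℤ,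
      g = x * σ n ⟨0, h⟩ ^ m * ρ n ⟨0, h⟩ ^ k := by
  induction g using PresentedGroup.induction_on with
  | H z =>
    obtain ⟨L, rfl⟩ : ∃ L, z = FreeGroup.mk L := ⟨z.toWord, FreeGroup.mk_toWord.symm⟩
    induction L using List.reverseRecOn with
    | nil =>
      refine ⟨1, one_mem _, 0, 0, ?_⟩
      simp [show (FreeGroup.mk ([] : List ((Fin (n-1) ⊕ Fin (n-1)) × Bool)) : FreeGroup _) = 1 from rfl]
    | append_singleton L p ih =>
      obtain ⟨x, hx, m, k, hg⟩ := ih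
      rw [← FreeGroup.mul_mk, map_mul, hg]
      obtain ⟨y, b⟩ := p
      rcases y with i | i <;> rcases b with _ | _
      · -- (inl i, false) : right-multiply by (σ n i)⁻¹
        rw [mk_single_false]
        refine ⟨x * (alphaElt n h (m-1) k i)⁻¹,
          mul_mem hx (inv_mem (Subgroup.subset_closure ⟨m-1, k, i, Or.inl rfl⟩)),
          m - 1, k, ?_⟩
        unfold alphaElt
        show _ * (σ n i)⁻¹ = _
        group
      · -- (inl i, true) : right-multiply by σ n i
        rw [mk_single_true]
        refine ⟨x * alphaElt n h m k i,
          mul_mem hx (Subgroup.subset_closure ⟨m, k, i, Or.inl rfl⟩),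
          m + 1, k, ?_⟩
        unfold alphaElt
        show _ * σ n i = _
        group
      · -- (inr i, false) : right-multiply by (ρ n i)⁻¹
        rw [mk_single_false]
        refine ⟨x * (betaElt n h m (k-1) i)⁻¹,
          mul_mem hx (inv_mem (Subgroup.subset_closure ⟨m, k-1, i, Or.inr rfl⟩)),
          m, k - 1, ?_⟩
        unfold betaElt
        show _ * (ρ n i)⁻¹ = _
        group
      · -- (inr i, true) : right-multiply by ρ n i
        rw [mk_single_true]
        refine ⟨x * betaElt n h m k i,
          mul_mem hx (Subgroup.subset_closure ⟨m, k, i, Or.inr rfl⟩),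
          m, k + 1, ?_⟩
        unfold betaElt
        show _ * ρ n i = _
        group

lemma closure_le_ker_sig (h : 0 < n - 1) :
    Subgroup.closure (genSet n h) ≤ (sigCount n).ker := by
  rw [Subgroup.closure_le]
  rintro y ⟨m, k, i, rfl | rfl⟩ <;>
    simp [alphaElt, betaElt, MonoidHom.mem_ker, mul_comm, mul_assoc, mul_left_comm]

lemma closure_le_ker_rho (h : 0 < n - 1) :
    Subgroup.closure (genSet n h) ≤ (rhoCount n).ker := by
  rw [Subgroup.closure_le]
  rintro y ⟨m, k, i, rfl | rfl⟩ <;>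
    simp [alphaElt, betaElt, MonoidHom.mem_ker, mul_comm, mul_assoc, mul_left_comm]

end GenVirtBraid

open GenVirtBraid in
/-- For every `n ≥ 3`, the commutator subgroup of `GVB_n` is generated by the elements
`α_{m,k,i}` and `β_{m,k,i}`, for `m, k ∈ ℤ` and `1 ≤ i ≤ n-1`. -/
theorem gvb_commutator_eq_closure_alpha_beta (n : ℕ) (hn : 3 ≤ n) :
    Subgroup.closure {x : GVB n | ∃ m k : ℤ, ∃ i : Fin (n-1),
        x = alphaElt n (by omega) m k i ∨ x = betaElt n (by omega) m k i}
      = commutator (GVB n) := by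
  have h : 0 < n - 1 := by omega
  have hset : {x : GVB n | ∃ m k : ℤ, ∃ i : Fin (n-1),
      x = alphaElt n (by omega) m k i ∨ x = betaElt n (by omega) m k i} = genSet n h := rfl
  rw [hset]
  apply le_antisymm
  · rw [Subgroup.closure_le]
    rintro y ⟨m, k, i, rfl | rfl⟩
    · exact alpha_mem_commutator h m k i
    · exact beta_mem_commutator h m k i
  · intro g hg
    obtain ⟨x, hx, m, k, hgd⟩ := decomp h g
    have hσg : sigCount n g = 1 := Abelianization.commutator_subset_ker (sigCount n) hg
    have hρg : rhoCount n g = 1 := Abelianization.commutator_subset_ker (rhoCount n) hg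
    have hσx : sigCount n x = 1 := closure_le_ker_sig h hx
    have hρx : rhoCount n x = 1 := closure_le_ker_rho h hx
    rw [hgd, map_mul, map_mul, map_zpow, map_zpow, hσx, sigCount_σ, sigCount_ρ] at hσg
    rw [hgd, map_mul, map_mul, map_zpow, map_zpow, hρx, rhoCount_σ, rhoCount_ρ] at hρg
    have hm : m = 0 := by
      have := congrArg Multiplicative.toAdd hσg
      simpa using this
    have hk : k = 0 := by
      have := congrArg Multiplicative.toAdd hρg
      simpa using this
    rw [hgd, hm, hk]
    simpa using hx
end

section
/- For every integer n ≥ 5, the commutator subgroup GVB_n' = [GVB_n, GVB_n] of the generalized virtual braid group GVB_n equals the subgroup of GVB_n generated by the 3n − 7 elements: α_{0,0,2} = σ_2 σ_1^{−1}, α_{1,0,2} = σ_1 σ_2 σ_1^{−2}, together with, for each j with 3 ≤ j ≤ n−1, the elements α_j = σ_j σ_1^{−1}, β_{0,j} = ρ_j ρ_1^{−1}, and β_{1,j} = σ_1 ρ_j ρ_1^{−1} σ_1^{−1}. -/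
/-! The explicit generators lie in the commutator subgroup: by the braid relation each
`σ_{i+1} σ_i⁻¹` (and likewise `ρ_{i+1} ρ_i⁻¹`) is a commutator, and the other generators are
products and conjugates of these. Conversely, let `𝓗` be the subgroup they generate. Every
generator of `GVB_n` lies in `𝓗 σ₁` or in `𝓗 ρ₁` (for `ρ₂` this needs a computation with the mixed
relations), and `⁅ρ₁, σ₁⁆ ∈ 𝓗`; so once `𝓗` is normal, `GVB_n ⧸ 𝓗` is generated by two commuting
elements and is abelian. Normality amounts to checking that conjugation by `σ₁^{±1}` and `ρ₁^{±1}`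
sends the explicit generators into `𝓗`; this is a rewriting with the defining relations, which uses
the room given by `n ≥ 5`: `σ₃`, `ρ₃` and `ρ₄` commute with `σ₁` and `ρ₁`. -/

open scoped commutatorElement

section GroupTheory

variable {G : Type*} [Group G]

theorem mul_inv_mem_commutator_of_braid {a b : G} (h : a * b * a = b * a * b) :
    b * a⁻¹ ∈ commutator G := by
  have h' : b * a⁻¹ = ⁅a⁻¹, b⁻¹⁆ := calc
    b * a⁻¹ = a⁻¹ * b⁻¹ * (b * a * b) * a⁻¹ := by group
    _ = ⁅a⁻¹, b⁻¹⁆ := by rw [← h, commutatorElement_def]; group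
  rw [h']
  exact Subgroup.commutator_mem_commutator (Subgroup.mem_top _) (Subgroup.mem_top _)

theorem Subgroup.mul_inv_mem_of_forall_succ {K : Subgroup G} {m : ℕ} (x : Fin m → G)
    (h : ∀ i j : Fin m, (j : ℕ) = i + 1 → x j * (x i)⁻¹ ∈ K) (i j : Fin m) :
    x i * (x j)⁻¹ ∈ K := by
  have hm : 0 < m := i.pos
  have from_zero : ∀ k (hk : k < m), x ⟨k, hk⟩ * (x ⟨0, hm⟩)⁻¹ ∈ K := by
    intro k
    induction k with
    | zero => simp
    | succ k ih =>
      intro hk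
      simpa [mul_assoc] using mul_mem (h ⟨k, by omega⟩ ⟨k + 1, hk⟩ rfl) (ih (by omega))
  simpa [mul_assoc] using mul_mem (from_zero i i.2) (inv_mem (from_zero j j.2))

theorem Subgroup.conj_mem_closure {S : Set G} {g : G} (hS : ∀ s ∈ S, g * s * g⁻¹ ∈ closure S)
    {x : G} (hx : x ∈ closure S) : g * x * g⁻¹ ∈ closure S := by
  induction hx using closure_induction with
  | mem s hs => exact hS s hs
  | one => simp
  | mul x y _ _ hx hy => simpa [mul_assoc] using mul_mem hx hy
  | inv x _ hx => simpa [mul_assoc] using inv_mem hx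

theorem Subgroup.mem_normalizer_closure {S : Set G} {g : G}
    (h₁ : ∀ s ∈ S, g * s * g⁻¹ ∈ closure S) (h₂ : ∀ s ∈ S, g⁻¹ * s * g ∈ closure S) :
    g ∈ normalizer (closure S : Set G) := by
  refine mem_normalizer_iff.mpr fun x => ⟨conj_mem_closure h₁, fun hx => ?_⟩
  simpa [mul_assoc] using conj_mem_closure (g := g⁻¹) (by simpa using h₂) hx

theorem Subgroup.normal_of_subset_normalizer {H : Subgroup G} {T : Set G} (hT : closure T = ⊤)
    (h : T ⊆ normalizer (H : Set G)) : H.Normal := by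
  rwa [← normalizer_eq_top_iff, eq_top_iff, ← hT, closure_le]

theorem Subgroup.commutator_le_of_commute_mk {N : Subgroup G} [N.Normal] {T : Set G}
    (hT : closure T = ⊤) (h : ∀ a ∈ T, ∀ b ∈ T, Commute (a : G ⧸ N) b) :
    _root_.commutator G ≤ N := by
  refine Normal.quotient_commutative_iff_commutator_le.mp ⟨⟨fun x y => ?_⟩⟩
  have hcomm := isMulCommutative_closure (k := QuotientGroup.mk' N '' T) <| by
    rintro _ ⟨a, ha, rfl⟩ _ ⟨b, hb, rfl⟩
    exact h a ha b hb
  rw [← MonoidHom.map_closure, hT, map_top_of_surjective _ (QuotientGroup.mk'_surjective N)]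
    at hcomm
  exact setLike_mul_comm (mem_top x) (mem_top y)

end GroupTheory

namespace GenVirtBraid

variable {n : ℕ}

theorem σ_commute_σ {i j : Fin (n-1)} (h : (i:ℕ) + 1 < j ∨ (j:ℕ) + 1 < i) :
    Commute (σ n i) (σ n j) := by
  have hr : σw n i * σw n j * (σw n j * σw n i)⁻¹ ∈ gvbRels n :=
    .inl <| .inl <| .inl <| .inl <| .inl <| .inl ⟨i, j, h, by group⟩
  exact PresentedGroup.mk_eq_mk_of_mul_inv_mem hr

theorem σ_braid {i j : Fin (n-1)} (h : (j:ℕ) = i + 1) :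
    σ n i * σ n j * σ n i = σ n j * σ n i * σ n j := by
  have hr : σw n i * σw n j * σw n i * (σw n j * σw n i * σw n j)⁻¹ ∈ gvbRels n :=
    .inl <| .inl <| .inl <| .inl <| .inl <| .inr ⟨i, j, h, rfl⟩
  exact PresentedGroup.mk_eq_mk_of_mul_inv_mem hr

theorem ρ_commute_ρ {i j : Fin (n-1)} (h : (i:ℕ) + 1 < j ∨ (j:ℕ) + 1 < i) :
    Commute (ρ n i) (ρ n j) := by
  have hr : ρw n i * ρw n j * (ρw n j * ρw n i)⁻¹ ∈ gvbRels n :=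
    .inl <| .inl <| .inl <| .inl <| .inr ⟨i, j, h, by group⟩
  exact PresentedGroup.mk_eq_mk_of_mul_inv_mem hr

theorem ρ_braid {i j : Fin (n-1)} (h : (j:ℕ) = i + 1) :
    ρ n i * ρ n j * ρ n i = ρ n j * ρ n i * ρ n j := by
  have hr : ρw n i * ρw n j * ρw n i * (ρw n j * ρw n i * ρw n j)⁻¹ ∈ gvbRels n :=
    .inl <| .inl <| .inl <| .inr ⟨i, j, h, rfl⟩
  exact PresentedGroup.mk_eq_mk_of_mul_inv_mem hr

theorem ρ_mul_σ_succ_mul_σ {i j : Fin (n-1)} (h : (j:ℕ) = i + 1) :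
    ρ n i * σ n j * σ n i = σ n j * σ n i * ρ n j := by
  have hr : ρw n i * σw n j * σw n i * (σw n j * σw n i * ρw n j)⁻¹ ∈ gvbRels n :=
    .inl <| .inl <| .inr ⟨i, j, h, rfl⟩
  exact PresentedGroup.mk_eq_mk_of_mul_inv_mem hr

theorem ρ_succ_mul_σ_mul_σ_succ {i j : Fin (n-1)} (h : (j:ℕ) = i + 1) :
    ρ n j * σ n i * σ n j = σ n i * σ n j * ρ n i := by
  have hr : ρw n j * σw n i * σw n j * (σw n i * σw n j * ρw n i)⁻¹ ∈ gvbRels n :=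
    .inl <| .inr ⟨i, j, h, rfl⟩
  exact PresentedGroup.mk_eq_mk_of_mul_inv_mem hr

theorem σ_commute_ρ {i j : Fin (n-1)} (h : (i:ℕ) + 1 < j ∨ (j:ℕ) + 1 < i) :
    Commute (σ n i) (ρ n j) := by
  have hr : σw n i * ρw n j * (ρw n j * σw n i)⁻¹ ∈ gvbRels n := .inr ⟨i, j, h, by group⟩
  exact PresentedGroup.mk_eq_mk_of_mul_inv_mem hr

theorem σ_mul_σ_inv_mem_commutator (i j : Fin (n-1)) : σ n i * (σ n j)⁻¹ ∈ commutator (GVB n) :=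
  Subgroup.mul_inv_mem_of_forall_succ (σ n)
    (fun _ _ h => mul_inv_mem_commutator_of_braid (σ_braid h)) i j

theorem ρ_mul_ρ_inv_mem_commutator (i j : Fin (n-1)) : ρ n i * (ρ n j)⁻¹ ∈ commutator (GVB n) :=
  Subgroup.mul_inv_mem_of_forall_succ (ρ n)
    (fun _ _ h => mul_inv_mem_commutator_of_braid (ρ_braid h)) i j

section CommutatorSubgroup

variable (hn : 5 ≤ n)

/-- `lowσ hn k` and `lowρ hn k` are the paper's `σ_{k+1}` and `ρ_{k+1}`, written `σ₁, …, ρ₄` below;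
`σ n i` itself is `σ_{i+1}`. -/
def lowσ (k : Fin 4) : GVB n := σ n ⟨k, by omega⟩

def lowρ (k : Fin 4) : GVB n := ρ n ⟨k, by omega⟩

local notation "σ₁" => lowσ hn 0
local notation "σ₂" => lowσ hn 1
local notation "σ₃" => lowσ hn 2
local notation "ρ₁" => lowρ hn 0
local notation "ρ₂" => lowρ hn 1
local notation "ρ₃" => lowρ hn 2
local notation "ρ₄" => lowρ hn 3

def commGens : Set (GVB n) :=
  {σ₂ * σ₁⁻¹, σ₁ * σ₂ * σ₁⁻¹ * σ₁⁻¹} ∪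
    {x | ∃ j : Fin (n-1), 2 ≤ (j : ℕ) ∧
      (x = σ n j * σ₁⁻¹ ∨ x = ρ n j * ρ₁⁻¹ ∨ x = σ₁ * ρ n j * ρ₁⁻¹ * σ₁⁻¹)}

local notation "𝓗" => Subgroup.closure (commGens hn)
local notation "υ" => ρ₁ * σ₂ * ρ₁⁻¹ * σ₁⁻¹

variable {hn}

theorem σ₁_commute_σ₃ : Commute σ₁ σ₃ := σ_commute_σ (by simp)
theorem σ₁_commute_ρ₃ : Commute σ₁ ρ₃ := σ_commute_ρ (by simp)
theorem σ₁_commute_ρ₄ : Commute σ₁ ρ₄ := σ_commute_ρ (by simp)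
theorem σ₂_commute_ρ₄ : Commute σ₂ ρ₄ := σ_commute_ρ (by simp)
theorem σ₃_commute_ρ₁ : Commute σ₃ ρ₁ := σ_commute_ρ (by simp)
theorem ρ₁_commute_ρ₃ : Commute ρ₁ ρ₃ := ρ_commute_ρ (by simp)
theorem ρ₁_commute_ρ₄ : Commute ρ₁ ρ₄ := ρ_commute_ρ (by simp)
theorem σ₁_braid_σ₂ : σ₁ * σ₂ * σ₁ = σ₂ * σ₁ * σ₂ := σ_braid rfl
theorem ρ₁_mul_σ₂_mul_σ₁ : ρ₁ * σ₂ * σ₁ = σ₂ * σ₁ * ρ₂ := ρ_mul_σ_succ_mul_σ rfl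
theorem ρ₂_mul_σ₃_mul_σ₂ : ρ₂ * σ₃ * σ₂ = σ₃ * σ₂ * ρ₃ := ρ_mul_σ_succ_mul_σ rfl
theorem ρ₃_mul_σ₂_mul_σ₃ : ρ₃ * σ₂ * σ₃ = σ₂ * σ₃ * ρ₂ := ρ_succ_mul_σ_mul_σ_succ rfl

variable {j : Fin (n-1)}

theorem σ₁_commute_σ (hj : 2 ≤ (j : ℕ)) : Commute σ₁ (σ n j) := σ_commute_σ (.inl (by simpa))
theorem σ₁_commute_ρ (hj : 2 ≤ (j : ℕ)) : Commute σ₁ (ρ n j) := σ_commute_ρ (.inl (by simpa))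
theorem σ_commute_ρ₁ (hj : 2 ≤ (j : ℕ)) : Commute (σ n j) ρ₁ := σ_commute_ρ (.inr (by simpa))
theorem ρ₁_commute_ρ (hj : 2 ≤ (j : ℕ)) : Commute ρ₁ (ρ n j) := ρ_commute_ρ (.inl (by simpa))

theorem σ₂_mul_σ₁_inv_mem : σ₂ * σ₁⁻¹ ∈ 𝓗 := Subgroup.subset_closure (.inl (.inl rfl))

theorem σ₁_mul_σ₂_mul_σ₁_inv_mul_σ₁_inv_mem : σ₁ * σ₂ * σ₁⁻¹ * σ₁⁻¹ ∈ 𝓗 :=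
  Subgroup.subset_closure (.inl (.inr rfl))

theorem σ_mul_σ₁_inv_mem_of_two_le (hj : 2 ≤ (j : ℕ)) : σ n j * σ₁⁻¹ ∈ 𝓗 :=
  Subgroup.subset_closure (.inr ⟨j, hj, .inl rfl⟩)

theorem ρ_mul_ρ₁_inv_mem_of_two_le (hj : 2 ≤ (j : ℕ)) : ρ n j * ρ₁⁻¹ ∈ 𝓗 :=
  Subgroup.subset_closure (.inr ⟨j, hj, .inr (.inl rfl)⟩)

theorem σ₁_mul_ρ_mul_ρ₁_inv_mul_σ₁_inv_mem (hj : 2 ≤ (j : ℕ)) :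
    σ₁ * ρ n j * ρ₁⁻¹ * σ₁⁻¹ ∈ 𝓗 :=
  Subgroup.subset_closure (.inr ⟨j, hj, .inr (.inr rfl)⟩)

theorem υ_mem : υ ∈ 𝓗 := by
  have h : (ρ₄ * ρ₁⁻¹)⁻¹ * (σ₂ * σ₁⁻¹) * (σ₁ * ρ₄ * ρ₁⁻¹ * σ₁⁻¹) = υ := calc
    _ = ρ₁ * (ρ₄⁻¹ * σ₂ * ρ₄) * ρ₁⁻¹ * σ₁⁻¹ := by group
    _ = υ := by rw [σ₂_commute_ρ₄.symm.inv_mul_cancel]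
  rw [← h]
  exact mul_mem (mul_mem (inv_mem (ρ_mul_ρ₁_inv_mem_of_two_le (by simp))) σ₂_mul_σ₁_inv_mem)
    (σ₁_mul_ρ_mul_ρ₁_inv_mul_σ₁_inv_mem (by simp))

theorem commutatorElement_ρ₁_σ₁_mem : ⁅ρ₁, σ₁⁆ ∈ 𝓗 := by
  have h : (ρ₃ * ρ₁⁻¹)⁻¹ * (σ₁ * ρ₃ * ρ₁⁻¹ * σ₁⁻¹) = ⁅ρ₁, σ₁⁆ := calc
    _ = ρ₁ * (ρ₃⁻¹ * σ₁ * ρ₃) * ρ₁⁻¹ * σ₁⁻¹ := by group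
    _ = ⁅ρ₁, σ₁⁆ := by rw [σ₁_commute_ρ₃.symm.inv_mul_cancel, commutatorElement_def]
  rw [← h]
  exact mul_mem (inv_mem (ρ_mul_ρ₁_inv_mem_of_two_le (by simp)))
    (σ₁_mul_ρ_mul_ρ₁_inv_mul_σ₁_inv_mem (by simp))

theorem commutatorElement_ρ₁_inv_σ₁_mem : ⁅ρ₁⁻¹, σ₁⁆ ∈ 𝓗 := by
  have hc : Commute ρ₃ (ρ₁⁻¹ * σ₁ * ρ₁) :=
    (ρ₁_commute_ρ₃.symm.inv_right.mul_right σ₁_commute_ρ₃.symm).mul_right ρ₁_commute_ρ₃.symm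
  have h : (ρ₃ * ρ₁⁻¹) * (σ₁ * ρ₃ * ρ₁⁻¹ * σ₁⁻¹)⁻¹ = ⁅ρ₁⁻¹, σ₁⁆ := calc
    _ = ρ₃ * (ρ₁⁻¹ * σ₁ * ρ₁) * ρ₃⁻¹ * σ₁⁻¹ := by group
    _ = ⁅ρ₁⁻¹, σ₁⁆ := by rw [hc.mul_inv_cancel, commutatorElement_def, inv_inv]
  rw [← h]
  exact mul_mem (ρ_mul_ρ₁_inv_mem_of_two_le (by simp))
    (inv_mem (σ₁_mul_ρ_mul_ρ₁_inv_mul_σ₁_inv_mem (by simp)))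

theorem σ₁_sq_conj_ρ₂_mul_ρ₁_inv_mem : σ₁ * (σ₁ * ρ₂ * ρ₁⁻¹ * σ₁⁻¹) * σ₁⁻¹ ∈ 𝓗 := by
  have hc : Commute (ρ₁⁻¹ * σ₁⁻¹) σ₃ := σ₃_commute_ρ₁.symm.inv_left.mul_left σ₁_commute_σ₃.inv_left
  have h : (σ₃ * σ₁⁻¹)⁻¹ * (σ₂ * σ₁⁻¹)⁻¹ * (ρ₃ * ρ₁⁻¹) * υ * (σ₃ * σ₁⁻¹) =
      σ₁ * (σ₁ * ρ₂ * ρ₁⁻¹ * σ₁⁻¹) * σ₁⁻¹ := calc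
    _ = σ₁ * σ₃⁻¹ * σ₁ * σ₂⁻¹ * ρ₃ * σ₂ * (ρ₁⁻¹ * σ₁⁻¹ * σ₃) * σ₁⁻¹ := by group
    _ = σ₁ * σ₃⁻¹ * σ₁ * σ₂⁻¹ * (ρ₃ * σ₂ * σ₃) * ρ₁⁻¹ * σ₁⁻¹ * σ₁⁻¹ := by rw [hc.eq]; group
    _ = σ₁ * (σ₃⁻¹ * σ₁ * σ₃) * ρ₂ * ρ₁⁻¹ * σ₁⁻¹ * σ₁⁻¹ := by rw [ρ₃_mul_σ₂_mul_σ₃]; group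
    _ = _ := by rw [σ₁_commute_σ₃.symm.inv_mul_cancel]; group
  rw [← h]
  exact mul_mem (mul_mem (mul_mem (mul_mem (inv_mem (σ_mul_σ₁_inv_mem_of_two_le (by simp)))
    (inv_mem σ₂_mul_σ₁_inv_mem)) (ρ_mul_ρ₁_inv_mem_of_two_le (by simp))) υ_mem)
    (σ_mul_σ₁_inv_mem_of_two_le (by simp))

theorem σ₁_sq_conj_ρ₃_mul_ρ₁_inv_mem : σ₁ * (σ₁ * ρ₃ * ρ₁⁻¹ * σ₁⁻¹) * σ₁⁻¹ ∈ 𝓗 := by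
  have h : (σ₁ * ρ₃ * ρ₁⁻¹ * σ₁⁻¹) * υ⁻¹ * (σ₂ * σ₁⁻¹) * (σ₁ * (σ₁ * ρ₂ * ρ₁⁻¹ * σ₁⁻¹) * σ₁⁻¹) =
      σ₁ * (σ₁ * ρ₃ * ρ₁⁻¹ * σ₁⁻¹) * σ₁⁻¹ := calc
    _ = σ₁ * ρ₃ * σ₂⁻¹ * ρ₁⁻¹ * (σ₂ * σ₁ * ρ₂) * ρ₁⁻¹ * σ₁⁻¹ * σ₁⁻¹ := by group
    _ = σ₁ * (ρ₃ * σ₁) * ρ₁⁻¹ * σ₁⁻¹ * σ₁⁻¹ := by rw [← ρ₁_mul_σ₂_mul_σ₁]; group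
    _ = _ := by rw [← σ₁_commute_ρ₃.eq]; group
  rw [← h]
  exact mul_mem (mul_mem (mul_mem (σ₁_mul_ρ_mul_ρ₁_inv_mul_σ₁_inv_mem (by simp)) (inv_mem υ_mem))
    σ₂_mul_σ₁_inv_mem) σ₁_sq_conj_ρ₂_mul_ρ₁_inv_mem

theorem σ₁_sq_conj_ρ_mul_ρ₁_inv_mem (hj : 2 ≤ (j : ℕ)) :
    σ₁ * (σ₁ * ρ n j * ρ₁⁻¹ * σ₁⁻¹) * σ₁⁻¹ ∈ 𝓗 := by
  have h : (ρ n j * ρ₁⁻¹) * (ρ₃ * ρ₁⁻¹)⁻¹ * (σ₁ * (σ₁ * ρ₃ * ρ₁⁻¹ * σ₁⁻¹) * σ₁⁻¹) =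
      σ₁ * (σ₁ * ρ n j * ρ₁⁻¹ * σ₁⁻¹) * σ₁⁻¹ := calc
    _ = ρ n j * (ρ₃⁻¹ * (σ₁ * σ₁) * ρ₃) * ρ₁⁻¹ * σ₁⁻¹ * σ₁⁻¹ := by group
    _ = ρ n j * (σ₁ * σ₁) * ρ₁⁻¹ * σ₁⁻¹ * σ₁⁻¹ := by
      rw [(σ₁_commute_ρ₃.symm.mul_right σ₁_commute_ρ₃.symm).inv_mul_cancel]
    _ = _ := by rw [← ((σ₁_commute_ρ hj).mul_left (σ₁_commute_ρ hj)).eq]; group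
  rw [← h]
  exact mul_mem (mul_mem (ρ_mul_ρ₁_inv_mem_of_two_le hj)
    (inv_mem (ρ_mul_ρ₁_inv_mem_of_two_le (by simp)))) σ₁_sq_conj_ρ₃_mul_ρ₁_inv_mem

theorem σ₁_conj_υ_mem : σ₁ * υ * σ₁⁻¹ ∈ 𝓗 := by
  have h : (σ₁ * ρ₄ * ρ₁⁻¹ * σ₁⁻¹)⁻¹ * (σ₁ * σ₂ * σ₁⁻¹ * σ₁⁻¹) *
      (σ₁ * (σ₁ * ρ₄ * ρ₁⁻¹ * σ₁⁻¹) * σ₁⁻¹) = σ₁ * υ * σ₁⁻¹ := calc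
    _ = σ₁ * ρ₁ * (ρ₄⁻¹ * σ₂ * ρ₄) * ρ₁⁻¹ * σ₁⁻¹ * σ₁⁻¹ := by group
    _ = _ := by rw [σ₂_commute_ρ₄.symm.inv_mul_cancel]; group
  rw [← h]
  exact mul_mem (mul_mem (inv_mem (σ₁_mul_ρ_mul_ρ₁_inv_mul_σ₁_inv_mem (by simp)))
    σ₁_mul_σ₂_mul_σ₁_inv_mul_σ₁_inv_mem) (σ₁_sq_conj_ρ_mul_ρ₁_inv_mem (by simp))

theorem ρ₂_mul_ρ₁_inv_mem : ρ₂ * ρ₁⁻¹ ∈ 𝓗 := by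
  have h : (σ₃ * σ₁⁻¹) * (σ₁ * σ₂ * σ₁⁻¹ * σ₁⁻¹) * (σ₁ * (σ₁ * ρ₃ * ρ₁⁻¹ * σ₁⁻¹) * σ₁⁻¹) *
      (σ₁ * υ * σ₁⁻¹)⁻¹ * (σ₃ * σ₁⁻¹)⁻¹ = ρ₂ * ρ₁⁻¹ := calc
    _ = σ₃ * σ₂ * ρ₃ * σ₂⁻¹ * (ρ₁⁻¹ * σ₃⁻¹) := by group
    _ = ρ₂ * σ₃ * σ₂ * σ₂⁻¹ * (σ₃⁻¹ * ρ₁⁻¹) := by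
      rw [← ρ₂_mul_σ₃_mul_σ₂, σ₃_commute_ρ₁.symm.inv_left.inv_right.eq]
    _ = ρ₂ * ρ₁⁻¹ := by group
  rw [← h]
  exact mul_mem (mul_mem (mul_mem (mul_mem (σ_mul_σ₁_inv_mem_of_two_le (by simp))
    σ₁_mul_σ₂_mul_σ₁_inv_mul_σ₁_inv_mem) σ₁_sq_conj_ρ₃_mul_ρ₁_inv_mem) (inv_mem σ₁_conj_υ_mem))
    (inv_mem (σ_mul_σ₁_inv_mem_of_two_le (by simp)))

theorem σ₁_conj_mem_of_mem_commGens : ∀ s ∈ commGens hn, σ₁ * s * σ₁⁻¹ ∈ 𝓗 := by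
  rintro s ((rfl | rfl) | ⟨j, hj, rfl | rfl | rfl⟩)
  · simpa only [mul_assoc] using σ₁_mul_σ₂_mul_σ₁_inv_mul_σ₁_inv_mem
  · have h : (σ₂ * σ₁⁻¹)⁻¹ * (σ₁ * σ₂ * σ₁⁻¹ * σ₁⁻¹) =
        σ₁ * (σ₁ * σ₂ * σ₁⁻¹ * σ₁⁻¹) * σ₁⁻¹ := calc
      _ = σ₁ * σ₂⁻¹ * (σ₁ * σ₂ * σ₁) * σ₁⁻¹ * σ₁⁻¹ * σ₁⁻¹ := by group
      _ = _ := by rw [σ₁_braid_σ₂]; group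
    rw [← h]
    exact mul_mem (inv_mem σ₂_mul_σ₁_inv_mem) σ₁_mul_σ₂_mul_σ₁_inv_mul_σ₁_inv_mem
  · rw [((σ₁_commute_σ hj).mul_right (Commute.refl σ₁).inv_right).mul_inv_cancel]
    exact σ_mul_σ₁_inv_mem_of_two_le hj
  · simpa only [mul_assoc] using σ₁_mul_ρ_mul_ρ₁_inv_mul_σ₁_inv_mem hj
  · exact σ₁_sq_conj_ρ_mul_ρ₁_inv_mem hj

theorem σ₁_conj_mem {x : GVB n} (hx : x ∈ 𝓗) : σ₁ * x * σ₁⁻¹ ∈ 𝓗 :=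
  Subgroup.conj_mem_closure σ₁_conj_mem_of_mem_commGens hx

theorem σ₁_inv_conj_υ_mem : σ₁⁻¹ * υ * σ₁ ∈ 𝓗 := by
  have h : σ₁⁻¹ * υ * σ₁ = (σ₂ * σ₁⁻¹) * (σ₁ * σ₂ * σ₁⁻¹ * σ₁⁻¹)⁻¹ *
      (σ₁ * (ρ₂ * ρ₁⁻¹) * σ₁⁻¹) * ⁅ρ₁, σ₁⁆⁻¹ := calc
    _ = σ₁⁻¹ * (ρ₁ * σ₂ * σ₁) * σ₁⁻¹ * ρ₁⁻¹ := by group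
    _ = σ₁⁻¹ * (σ₂ * σ₁ * σ₂) * σ₂⁻¹ * ρ₂ * σ₁⁻¹ * ρ₁⁻¹ := by rw [ρ₁_mul_σ₂_mul_σ₁]; group
    _ = _ := by rw [← σ₁_braid_σ₂, commutatorElement_def]; group
  rw [h]
  exact mul_mem (mul_mem (mul_mem σ₂_mul_σ₁_inv_mem (inv_mem σ₁_mul_σ₂_mul_σ₁_inv_mul_σ₁_inv_mem))
    (σ₁_conj_mem ρ₂_mul_ρ₁_inv_mem)) (inv_mem commutatorElement_ρ₁_σ₁_mem)

theorem σ₁_inv_conj_ρ₄_mul_ρ₁_inv_mem : σ₁⁻¹ * (ρ₄ * ρ₁⁻¹) * σ₁ ∈ 𝓗 := by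
  have h : (σ₂ * σ₁⁻¹) * (σ₁ * σ₂ * σ₁⁻¹ * σ₁⁻¹)⁻¹ * (ρ₄ * ρ₁⁻¹) * (σ₁⁻¹ * υ * σ₁)⁻¹ =
      σ₁⁻¹ * (ρ₄ * ρ₁⁻¹) * σ₁ := calc
    _ = σ₁⁻¹ * (σ₁ * σ₂ * σ₁) * σ₂⁻¹ * σ₁⁻¹ * (ρ₄ * σ₂⁻¹) * ρ₁⁻¹ * σ₁ := by group
    _ = _ := by rw [σ₁_braid_σ₂, ← σ₂_commute_ρ₄.inv_left.eq]; group
  rw [← h]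
  exact mul_mem (mul_mem (mul_mem σ₂_mul_σ₁_inv_mem (inv_mem σ₁_mul_σ₂_mul_σ₁_inv_mul_σ₁_inv_mem))
    (ρ_mul_ρ₁_inv_mem_of_two_le (by simp))) (inv_mem σ₁_inv_conj_υ_mem)

theorem σ₁_inv_conj_ρ_mul_ρ₁_inv_mem (hj : 2 ≤ (j : ℕ)) :
    σ₁⁻¹ * (ρ n j * ρ₁⁻¹) * σ₁ ∈ 𝓗 := by
  have h : (ρ n j * ρ₁⁻¹) * (ρ₄ * ρ₁⁻¹)⁻¹ * (σ₁⁻¹ * (ρ₄ * ρ₁⁻¹) * σ₁) =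
      σ₁⁻¹ * (ρ n j * ρ₁⁻¹) * σ₁ := calc
    _ = ρ n j * (ρ₄⁻¹ * σ₁⁻¹ * ρ₄) * ρ₁⁻¹ * σ₁ := by group
    _ = _ := by
      rw [σ₁_commute_ρ₄.inv_left.symm.inv_mul_cancel, ← (σ₁_commute_ρ hj).inv_left.eq]; group
  rw [← h]
  exact mul_mem (mul_mem (ρ_mul_ρ₁_inv_mem_of_two_le hj)
    (inv_mem (ρ_mul_ρ₁_inv_mem_of_two_le (by simp)))) σ₁_inv_conj_ρ₄_mul_ρ₁_inv_mem

theorem σ₁_inv_conj_mem_of_mem_commGens : ∀ s ∈ commGens hn, σ₁⁻¹ * s * σ₁ ∈ 𝓗 := by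
  rintro s ((rfl | rfl) | ⟨j, hj, rfl | rfl | rfl⟩)
  · have h : (σ₂ * σ₁⁻¹) * (σ₁ * σ₂ * σ₁⁻¹ * σ₁⁻¹)⁻¹ = σ₁⁻¹ * (σ₂ * σ₁⁻¹) * σ₁ := calc
      _ = σ₁⁻¹ * (σ₁ * σ₂ * σ₁) * σ₂⁻¹ * σ₁⁻¹ := by group
      _ = _ := by rw [σ₁_braid_σ₂]; group
    rw [← h]
    exact mul_mem σ₂_mul_σ₁_inv_mem (inv_mem σ₁_mul_σ₂_mul_σ₁_inv_mul_σ₁_inv_mem)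
  · convert σ₂_mul_σ₁_inv_mem using 1
    group
  · rw [((σ₁_commute_σ hj).mul_right (Commute.refl σ₁).inv_right).inv_mul_cancel]
    exact σ_mul_σ₁_inv_mem_of_two_le hj
  · exact σ₁_inv_conj_ρ_mul_ρ₁_inv_mem hj
  · convert ρ_mul_ρ₁_inv_mem_of_two_le hj using 1
    group

theorem σ₁_mem_normalizer : σ₁ ∈ Subgroup.normalizer (𝓗 : Set (GVB n)) :=
  Subgroup.mem_normalizer_closure σ₁_conj_mem_of_mem_commGens σ₁_inv_conj_mem_of_mem_commGens

/- `g σ₁ g⁻¹ = ⁅g, σ₁⁆ σ₁` normalizes `𝓗`, and the generators `σ₁σ₂σ₁⁻²` and `σ₁ρ_jρ₁⁻¹σ₁⁻¹` are the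
`σ₁`-conjugates of `σ₂σ₁⁻¹` and `ρ_jρ₁⁻¹`. -/
theorem conj_mem_of_mem_commGens {g : GVB n}
    (hσ : ∀ j : Fin (n-1), 2 ≤ (j : ℕ) → Commute g (σ n j))
    (hρ : ∀ j : Fin (n-1), 2 ≤ (j : ℕ) → Commute g (ρ n j)) (hρ₁ : Commute g ρ₁)
    (hσ₁ : ⁅g, σ₁⁆ ∈ 𝓗) (hσ₂ : g * (σ₂ * σ₁⁻¹) * g⁻¹ ∈ 𝓗) :
    ∀ s ∈ commGens hn, g * s * g⁻¹ ∈ 𝓗 := by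
  have hgσ₁ : g * σ₁ * g⁻¹ = ⁅g, σ₁⁆ * σ₁ := by rw [commutatorElement_def]; group
  have conj_mem : ∀ x ∈ 𝓗, (g * σ₁ * g⁻¹) * x * (g * σ₁ * g⁻¹)⁻¹ ∈ 𝓗 := fun x hx => by
    rw [hgσ₁]
    exact (Subgroup.mem_normalizer_iff.mp
      (mul_mem (Subgroup.le_normalizer hσ₁) σ₁_mem_normalizer) x).mp hx
  have hb : ∀ j : Fin (n-1), 2 ≤ (j : ℕ) → g * (ρ n j * ρ₁⁻¹) * g⁻¹ = ρ n j * ρ₁⁻¹ :=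
    fun j hj => ((hρ j hj).mul_right hρ₁.inv_right).mul_inv_cancel
  rintro s ((rfl | rfl) | ⟨j, hj, rfl | rfl | rfl⟩)
  · exact hσ₂
  · have h : g * (σ₁ * σ₂ * σ₁⁻¹ * σ₁⁻¹) * g⁻¹ =
        (g * σ₁ * g⁻¹) * (g * (σ₂ * σ₁⁻¹) * g⁻¹) * (g * σ₁ * g⁻¹)⁻¹ := by group
    rw [h]
    exact conj_mem _ hσ₂
  · have h : g * (σ n j * σ₁⁻¹) * g⁻¹ = (σ n j * σ₁⁻¹) * ⁅g, σ₁⁆⁻¹ := calc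
      _ = (g * σ n j * g⁻¹) * (g * σ₁ * g⁻¹)⁻¹ := by group
      _ = _ := by rw [(hσ j hj).mul_inv_cancel, hgσ₁]; group
    rw [h]
    exact mul_mem (σ_mul_σ₁_inv_mem_of_two_le hj) (inv_mem hσ₁)
  · rw [hb j hj]
    exact ρ_mul_ρ₁_inv_mem_of_two_le hj
  · have h : g * (σ₁ * ρ n j * ρ₁⁻¹ * σ₁⁻¹) * g⁻¹ =
        (g * σ₁ * g⁻¹) * (g * (ρ n j * ρ₁⁻¹) * g⁻¹) * (g * σ₁ * g⁻¹)⁻¹ := by group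
    rw [h, hb j hj]
    exact conj_mem _ (ρ_mul_ρ₁_inv_mem_of_two_le hj)

theorem ρ₁_conj_σ₂_mul_σ₁_inv_mem : ρ₁ * (σ₂ * σ₁⁻¹) * ρ₁⁻¹ ∈ 𝓗 := by
  have h : ρ₁ * (σ₂ * σ₁⁻¹) * ρ₁⁻¹ = υ * ⁅ρ₁, σ₁⁆⁻¹ := by rw [commutatorElement_def]; group
  rw [h]
  exact mul_mem υ_mem (inv_mem commutatorElement_ρ₁_σ₁_mem)

theorem ρ₁_inv_conj_σ₂_mul_σ₁_inv_mem : ρ₁⁻¹ * (σ₂ * σ₁⁻¹) * ρ₁ ∈ 𝓗 := by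
  have hc : Commute ρ₄ (ρ₁⁻¹ * σ₂ * ρ₁) :=
    (ρ₁_commute_ρ₄.symm.inv_right.mul_right σ₂_commute_ρ₄.symm).mul_right ρ₁_commute_ρ₄.symm
  have h : (ρ₄ * ρ₁⁻¹) * (σ₂ * σ₁⁻¹) * (σ₁ * ρ₄ * ρ₁⁻¹ * σ₁⁻¹)⁻¹ * ⁅ρ₁⁻¹, σ₁⁆⁻¹ =
      ρ₁⁻¹ * (σ₂ * σ₁⁻¹) * ρ₁ := calc
    _ = ρ₄ * (ρ₁⁻¹ * σ₂ * ρ₁) * ρ₄⁻¹ * (ρ₁⁻¹ * σ₁⁻¹ * ρ₁) := by rw [commutatorElement_def]; group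
    _ = _ := by rw [hc.mul_inv_cancel]; group
  rw [← h]
  exact mul_mem (mul_mem (mul_mem (ρ_mul_ρ₁_inv_mem_of_two_le (by simp)) σ₂_mul_σ₁_inv_mem)
    (inv_mem (σ₁_mul_ρ_mul_ρ₁_inv_mul_σ₁_inv_mem (by simp))))
    (inv_mem commutatorElement_ρ₁_inv_σ₁_mem)

theorem ρ₁_mem_normalizer : ρ₁ ∈ Subgroup.normalizer (𝓗 : Set (GVB n)) := by
  refine Subgroup.mem_normalizer_closure
    (conj_mem_of_mem_commGens (fun j hj => (σ_commute_ρ₁ hj).symm) (fun j hj => ρ₁_commute_ρ hj)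
      (.refl _) commutatorElement_ρ₁_σ₁_mem ρ₁_conj_σ₂_mul_σ₁_inv_mem) fun s hs => ?_
  simpa using conj_mem_of_mem_commGens (fun j hj => (σ_commute_ρ₁ hj).symm.inv_left)
    (fun j hj => (ρ₁_commute_ρ hj).inv_left) (Commute.refl _).inv_left
    commutatorElement_ρ₁_inv_σ₁_mem (by simpa using ρ₁_inv_conj_σ₂_mul_σ₁_inv_mem) s hs

theorem σ_mul_σ₁_inv_mem (i : Fin (n-1)) : σ n i * σ₁⁻¹ ∈ 𝓗 := by
  rcases (by omega : (i : ℕ) = 0 ∨ (i : ℕ) = 1 ∨ 2 ≤ (i : ℕ)) with h | h | h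
  · rw [show σ n i = σ₁ from congrArg (σ n) (Fin.ext h), mul_inv_cancel]
    exact one_mem _
  · rw [show σ n i = σ₂ from congrArg (σ n) (Fin.ext h)]
    exact σ₂_mul_σ₁_inv_mem
  · exact σ_mul_σ₁_inv_mem_of_two_le h

theorem ρ_mul_ρ₁_inv_mem (i : Fin (n-1)) : ρ n i * ρ₁⁻¹ ∈ 𝓗 := by
  rcases (by omega : (i : ℕ) = 0 ∨ (i : ℕ) = 1 ∨ 2 ≤ (i : ℕ)) with h | h | h
  · rw [show ρ n i = ρ₁ from congrArg (ρ n) (Fin.ext h), mul_inv_cancel]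
    exact one_mem _
  · rw [show ρ n i = ρ₂ from congrArg (ρ n) (Fin.ext h)]
    exact ρ₂_mul_ρ₁_inv_mem
  · exact ρ_mul_ρ₁_inv_mem_of_two_le h

theorem closure_commGens_normal : (𝓗).Normal := by
  refine Subgroup.normal_of_subset_normalizer (PresentedGroup.closure_range_of _) ?_
  rintro _ ⟨i | i, rfl⟩
  · show σ n i ∈ _
    simpa using mul_mem (Subgroup.le_normalizer (σ_mul_σ₁_inv_mem i)) σ₁_mem_normalizer
  · show ρ n i ∈ _
    simpa using mul_mem (Subgroup.le_normalizer (ρ_mul_ρ₁_inv_mem i)) ρ₁_mem_normalizer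

theorem commutator_le_closure_commGens : commutator (GVB n) ≤ 𝓗 := by
  have := closure_commGens_normal (hn := hn)
  have hcomm : Commute (ρ₁ : GVB n ⧸ 𝓗) σ₁ := by
    have h := (QuotientGroup.eq_one_iff _).mpr (commutatorElement_ρ₁_σ₁_mem (hn := hn))
    rwa [← QuotientGroup.mk'_apply, map_commutatorElement, commutatorElement_eq_one_iff_commute]
      at h
  have hmk : ∀ a ∈ Set.range (PresentedGroup.of (rels := gvbRels n)),
      (a : GVB n ⧸ 𝓗) = σ₁ ∨ (a : GVB n ⧸ 𝓗) = ρ₁ := by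
    rintro _ ⟨i | i, rfl⟩
    · exact .inl <| QuotientGroup.eq_iff_div_mem.mpr <| by
        rw [div_eq_mul_inv]; exact σ_mul_σ₁_inv_mem i
    · exact .inr <| QuotientGroup.eq_iff_div_mem.mpr <| by
        rw [div_eq_mul_inv]; exact ρ_mul_ρ₁_inv_mem i
  refine Subgroup.commutator_le_of_commute_mk (PresentedGroup.closure_range_of _) ?_
  intro a ha b hb
  rcases hmk a ha with h | h <;> rcases hmk b hb with h' | h' <;>
    simp only [h, h', Commute.refl, hcomm, hcomm.symm]

theorem closure_commGens_le_commutator : 𝓗 ≤ commutator (GVB n) := by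
  have hN : (commutator (GVB n)).Normal := inferInstance
  rw [Subgroup.closure_le]
  rintro _ ((rfl | rfl) | ⟨j, -, rfl | rfl | rfl⟩)
  · exact σ_mul_σ_inv_mem_commutator _ _
  · rw [show σ₁ * σ₂ * σ₁⁻¹ * σ₁⁻¹ = σ₁ * (σ₂ * σ₁⁻¹) * σ₁⁻¹ by group]
    exact hN.conj_mem _ (σ_mul_σ_inv_mem_commutator _ _) _
  · exact σ_mul_σ_inv_mem_commutator _ _
  · exact ρ_mul_ρ_inv_mem_commutator _ _
  · rw [show σ₁ * ρ n j * ρ₁⁻¹ * σ₁⁻¹ = σ₁ * (ρ n j * ρ₁⁻¹) * σ₁⁻¹ by group]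
    exact hN.conj_mem _ (ρ_mul_ρ_inv_mem_commutator _ _) _

end CommutatorSubgroup

end GenVirtBraid

open GenVirtBraid in
/-- For `n ≥ 5`, the commutator subgroup of `GVB_n` is generated by the `3n - 7` elements
`α_{0,0,2} = σ₂σ₁⁻¹`, `α_{1,0,2} = σ₁σ₂σ₁⁻²`, and, for `3 ≤ j ≤ n-1` (so `2 ≤ (j:ℕ)` in the
0-indexed convention), `α_j = σ_jσ₁⁻¹`, `β_{0,j} = ρ_jρ₁⁻¹`, `β_{1,j} = σ₁ρ_jρ₁⁻¹σ₁⁻¹`. -/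
theorem gvb_commutator_eq_closure_explicit (n : ℕ) (hn : 5 ≤ n) :
    Subgroup.closure
      (({ σ n ⟨1, by omega⟩ * (σ n ⟨0, by omega⟩)⁻¹,
          σ n ⟨0, by omega⟩ * σ n ⟨1, by omega⟩ * (σ n ⟨0, by omega⟩)⁻¹ *
            (σ n ⟨0, by omega⟩)⁻¹ } : Set (GVB n)) ∪
        {x : GVB n | ∃ j : Fin (n-1), 2 ≤ (j : ℕ) ∧
          (x = σ n j * (σ n ⟨0, by omega⟩)⁻¹ ∨
           x = ρ n j * (ρ n ⟨0, by omega⟩)⁻¹ ∨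
           x = σ n ⟨0, by omega⟩ * ρ n j * (ρ n ⟨0, by omega⟩)⁻¹ * (σ n ⟨0, by omega⟩)⁻¹)})
      = commutator (GVB n) :=
  le_antisymm (closure_commGens_le_commutator (hn := hn))
    (commutator_le_closure_commGens (hn := hn))
end
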